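/- arXiv:2303.05152 — 6 statements merged into one kernel-verified Lean document; each statement's English description precedes it below -/
import Mathlib

section
/- (WBP-Weight-Monotony for the predicate WBP_GCL; Lemma 7 of the paper) For every message m : M, every view view : Finset (M × List Π), and all weights w, w' : ℕ with 1 ≤ w' ≤ w, if WBP_GCL(m, w, view) holds then WBP_GCL(m, w', view) also holds. -/
/-- `subchain γ k` denotes the entries of `γ` in positions 3 through `k`
(1-indexed, truncated if `γ` is shorter), i.e. `(γ.take k).drop 2`. -/
def subchain {Proc : Type*} (γ : List Proc) (k : ℕ) : List Proc :=
  (γ.take k).drop 2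

/-- The backing set `S(m, view)`: processes occurring among the first two
entries of some chain `(m, γ) ∈ view`. -/
def backing {Proc M : Type*} [DecidableEq Proc] [DecidableEq M]
    (m : M) (view : Finset (M × List Proc)) : Finset Proc :=
  view.biUnion (fun c => if c.1 = m then (c.2.take 2).toFinset else ∅)

/-- The weight-based predicate `WBP_GCL(m, w, view)`. -/
def WBP_GCL {Proc M : Type*} [DecidableEq Proc] [DecidableEq M]
    (t : ℕ) (m : M) (w : ℕ) (view : Finset (M × List Proc)) : Prop :=
  ∃ γ : List Proc, (m, γ) ∈ view ∧
    w ≤ (backing m view \ (subchain γ (t + 3 - w)).toFinset).card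

theorem wbp_gcl_weight_monotony
    {Proc M : Type*} [Fintype Proc] [DecidableEq Proc] [DecidableEq M]
    (t : ℕ) (m : M) (view : Finset (M × List Proc)) (w w' : ℕ)
    (h1 : 1 ≤ w') (h2 : w' ≤ w)
    (h : WBP_GCL t m w view) : WBP_GCL t m w' view := by
  obtain ⟨γ, hγ, hcard⟩ := h
  refine ⟨γ, hγ, ?_⟩
  set S := backing m view
  set δ := γ.drop 2 with hδ
  have hsub : ∀ k : ℕ, subchain γ k = δ.take (k - 2) := by
    intro k; simp [subchain, hδ, List.drop_take]
  -- new elements bound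
  have key : ∀ a b : ℕ, a ≤ b →
      ((δ.take b).toFinset \ (δ.take a).toFinset).card ≤ b - a := by
    intro a b hab
    have hsplit : δ.take b = δ.take a ++ (δ.drop a).take (b - a) := by
      rw [← List.take_add, Nat.add_sub_cancel' hab]
    have hss : (δ.take b).toFinset \ (δ.take a).toFinset ⊆
        ((δ.drop a).take (b - a)).toFinset := by
      intro x hx
      rw [Finset.mem_sdiff] at hx
      have := hx.1
      rw [hsplit, List.toFinset_append, Finset.mem_union] at this
      exact this.resolve_left hx.2
    calc ((δ.take b).toFinset \ (δ.take a).toFinset).card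
        ≤ ((δ.drop a).take (b - a)).toFinset.card := Finset.card_le_card hss
      _ ≤ ((δ.drop a).take (b - a)).length := (δ.drop a).take (b - a) |>.toFinset_card_le
      _ ≤ b - a := List.length_take_le _ _
  have hle : t + 3 - w - 2 ≤ t + 3 - w' - 2 := by omega
  have hb := key _ _ hle
  rw [hsub] at hcard ⊢
  set B := (δ.take (t + 3 - w - 2)).toFinset
  set B' := (δ.take (t + 3 - w' - 2)).toFinset
  have hss : (S \ B) \ (B' \ B) ⊆ S \ B' := by
    intro x hx
    simp only [Finset.mem_sdiff, not_and, not_not] at hx ⊢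
    exact ⟨hx.1.1, fun hxB' => hx.1.2 (hx.2 hxB')⟩
  have h3 : (S \ B).card - (B' \ B).card ≤ (S \ B').card :=
    le_trans (Finset.le_card_sdiff _ _) (Finset.card_le_card hss)
  omega
end

section
/- (WBP-View-Monotony for the predicate WBP_GCL; part of Lemma 8 of the paper) For every message m : M, weight w : ℕ with w ≥ 1, and views view, view' : Finset (M × List Π) with view ⊆ view', if WBP_GCL(m, w, view) holds then WBP_GCL(m, w, view') also holds. -/
theorem wbp_gcl_view_monotony
    {Proc M : Type*} [Fintype Proc] [DecidableEq Proc] [DecidableEq M]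
    (t : ℕ) (m : M) (w : ℕ) (hw : 1 ≤ w)
    (view view' : Finset (M × List Proc)) (hsub : view ⊆ view')
    (h : WBP_GCL t m w view) : WBP_GCL t m w view' := by
  obtain ⟨γ, hγ, hcard⟩ := h
  refine ⟨γ, hsub hγ, hcard.trans (Finset.card_le_card ?_)⟩
  exact Finset.sdiff_subset_sdiff (Finset.biUnion_subset_biUnion_of_subset_left _ hsub)
    le_rfl
end

section
/- (WBP-Local-Conspicuity for the predicate WBP_GCL; part of Lemma 8 of the paper) Suppose every chain (m', γ) in a view view : Finset (M × List Π) is valid, i.e. γ is nonempty, has no duplicate entries, and its first entry is p_sender. Then for every message m : M, WBP_GCL(m, 1, view) holds if and only if m occurs as the message component of some chain of view. -/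
/-- A chain `(m, γ)` is valid if `γ` is nonempty, has no duplicate entries,
and its first entry is `p_sender`. -/
def ValidChain {Proc M : Type*} (p_sender : Proc) (c : M × List Proc) : Prop :=
  c.2 ≠ [] ∧ c.2.Nodup ∧ c.2.head? = some p_sender

theorem wbp_gcl_local_conspicuity
    {Proc M : Type*} [Fintype Proc] [DecidableEq Proc] [DecidableEq M]
    (p_sender : Proc) (t : ℕ) (view : Finset (M × List Proc))
    (hvalid : ∀ c ∈ view, ValidChain p_sender c) (m : M) :
    WBP_GCL t m 1 view ↔ ∃ γ : List Proc, (m, γ) ∈ view := by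
  constructor
  · rintro ⟨γ, hγ, -⟩; exact ⟨γ, hγ⟩
  · rintro ⟨γ, hγ⟩
    obtain ⟨hne, hnd, hhead⟩ := hvalid _ hγ
    obtain ⟨p, tl, rfl⟩ := List.exists_cons_of_ne_nil hne
    simp only [List.head?_cons, Option.some.injEq] at hhead
    subst hhead
    refine ⟨p :: tl, hγ, ?_⟩
    rw [Finset.one_le_card]
    refine ⟨p, Finset.mem_sdiff.mpr ⟨?_, ?_⟩⟩
    · refine Finset.mem_biUnion.mpr ⟨(m, p :: tl), hγ, ?_⟩
      simp [List.take_cons]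
    · simp only [List.mem_toFinset, subchain]
      intro hmem
      have h2 : p ∈ (p :: tl).drop 2 :=
        ((List.take_sublist _ _).drop 2).subset hmem
      have h3 : p ∈ tl := by rw [List.drop_succ_cons] at h2; exact List.mem_of_mem_drop h2
      exact (List.nodup_cons.mp hnd).1 h3
end

section
/- (Combinatorial core of the conspicuity of WBP_GCL; Lemma 10 of the paper, case of a long revealing chain) Let F : Finset Π with card(F) ≤ t (the Byzantine processes), let view : Finset (M × List Π) be a view, m : M a message, and w : ℕ with w ≥ 1. Suppose there is a chain (m, γ) ∈ view such that γ has no duplicate entries, γ has length at least t+3−w, and card(S(m, view) \ toFinset(subchain(γ, 3, t+3−w))) ≥ w. Then there exists a process q ∉ F with q ∈ S(m, view) ∪ toFinset(subchain(γ, 3, t+3−w)). -/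
theorem wbp_gcl_conspicuity_core
    {Proc M : Type*} [Fintype Proc] [DecidableEq Proc] [DecidableEq M]
    (t : ℕ) (F : Finset Proc) (hF : F.card ≤ t)
    (view : Finset (M × List Proc)) (m : M) (w : ℕ) (hw : 1 ≤ w)
    (γ : List Proc) (hmem : (m, γ) ∈ view) (hnd : γ.Nodup)
    (hlen : t + 3 - w ≤ γ.length)
    (hcard : w ≤ (backing m view \ (subchain γ (t + 3 - w)).toFinset).card) :
    ∃ q : Proc, q ∉ F ∧
      q ∈ backing m view ∪ (subchain γ (t + 3 - w)).toFinset := by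
  set A := backing m view
  set B := (subchain γ (t + 3 - w)).toFinset with hB
  have hndB : (subchain γ (t + 3 - w)).Nodup :=
    hnd.sublist (((γ.take (t+3-w)).drop_sublist 2).trans (γ.take_sublist _))
  have hBcard : B.card = t + 3 - w - 2 := by
    rw [hB, List.toFinset_card_of_nodup hndB]
    simp [subchain, Nat.min_eq_left hlen]
  have hsub : (A \ B) ∪ B ⊆ A ∪ B := by
    intro x hx
    rcases Finset.mem_union.1 hx with h | h
    · exact Finset.mem_union_left _ (Finset.mem_sdiff.1 h).1
    · exact Finset.mem_union_right _ h
  have hdisj : Disjoint (A \ B) B := Finset.sdiff_disjoint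
  have hlt : F.card < (A ∪ B).card := by
    have h1 : (A \ B).card + B.card ≤ (A ∪ B).card := by
      rw [← Finset.card_union_of_disjoint hdisj]
      exact Finset.card_le_card hsub
    omega
  by_contra hcon
  push_neg at hcon
  have : A ∪ B ⊆ F := fun x hx => by
    by_contra hxF
    exact hcon x hxF hx
  exact absurd (Finset.card_le_card this) (not_le.2 hlt)
end

section
/- (Combinatorial core of WBP-Good-Case-Liveness for WBP_GCL; Lemma 14 of the paper) Let Q : Finset Π be a nonempty finite set of processes with p_sender ∉ Q, let m : M, and let view : Finset (M × List Π) be a view containing, for every q ∈ Q, the two-entry chain (m, [p_sender, q]). Then WBP_GCL(m, card(Q) + 1, view) holds. -/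
theorem wbp_gcl_good_case_liveness_core
    {Proc M : Type*} [Fintype Proc] [DecidableEq Proc] [DecidableEq M]
    (t : ℕ) (p_sender : Proc) (Q : Finset Proc) (hQ : Q.Nonempty)
    (hps : p_sender ∉ Q) (m : M) (view : Finset (M × List Proc))
    (hchains : ∀ q ∈ Q, (m, [p_sender, q]) ∈ view) :
    WBP_GCL t m (Q.card + 1) view := by
  obtain ⟨q0, hq0⟩ := hQ
  refine ⟨[p_sender, q0], hchains q0 hq0, ?_⟩
  have hsub : subchain ([p_sender, q0]) (t + 3 - (Q.card + 1)) = [] := by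
    simp [subchain, List.drop_eq_nil_iff, List.length_take]
  rw [hsub]
  have hsubset : insert p_sender Q ⊆ backing m view := by
    intro x hx
    rcases Finset.mem_insert.mp hx with h | h
    · exact Finset.mem_biUnion.mpr ⟨(m, [p_sender, q0]), hchains q0 hq0,
        by simp [h]⟩
    · exact Finset.mem_biUnion.mpr ⟨(m, [p_sender, x]), hchains x h,
        by simp⟩
  calc Q.card + 1 = (insert p_sender Q).card := (Finset.card_insert_of_notMem hps).symm
    _ ≤ (backing m view).card := Finset.card_le_card hsubset
    _ = _ := by simp
end

section
/- (Static transfer step underlying WBP-Final-Visibility for WBP_GCL; concluding argument of Lemma 13 of the paper) Let m : M, w : ℕ with w ≥ 1, and let view, view' : Finset (M × List Π) be two views. Suppose (i) S(m, view) ⊆ S(m, view'), and (ii) for every chain (m, γ) ∈ view there exists a chain (m, γ') ∈ view' such that toFinset(subchain(γ', 3, t+3−w)) ∩ S(m, view) ⊆ toFinset(subchain(γ, 3, t+3−w)). Then WBP_GCL(m, w, view) implies WBP_GCL(m, w, view'). -/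
theorem wbp_gcl_static_transfer
    {Proc M : Type*} [Fintype Proc] [DecidableEq Proc] [DecidableEq M]
    (t : ℕ) (m : M) (w : ℕ) (hw : 1 ≤ w)
    (view view' : Finset (M × List Proc))
    (hS : backing m view ⊆ backing m view')
    (hchains : ∀ γ : List Proc, (m, γ) ∈ view →
      ∃ γ' : List Proc, (m, γ') ∈ view' ∧
        (subchain γ' (t + 3 - w)).toFinset ∩ backing m view ⊆
          (subchain γ (t + 3 - w)).toFinset)
    (h : WBP_GCL t m w view) : WBP_GCL t m w view' := by
  obtain ⟨γ, hγ, hcard⟩ := h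
  obtain ⟨γ', hγ', hsub⟩ := hchains γ hγ
  refine ⟨γ', hγ', le_trans hcard (Finset.card_le_card ?_)⟩
  intro x hx
  rw [Finset.mem_sdiff] at hx ⊢
  refine ⟨hS hx.1, fun hxT => hx.2 (hsub (Finset.mem_inter.mpr ⟨hxT, hx.1⟩))⟩
end
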